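/- (Theorem 5.4, extended Pythagorean theorem with two boundary points) Let S ⊆ {1,…,N}, let η, η' ∈ P lie in the relative interior of the face determined by S (l_r = 0 on S and l_r > 0 off S at both points), and let ξ'' ∈ P°. Suppose the limiting orthogonality condition holds: ⟨η − ξ', ∇φ(ξ'') − ∇φ(ξ')⟩ → 0 as ξ' → η' within P° (this expresses that the limit of the tangential direction of the dual-connection geodesic from ξ'' with limit η' is perpendicular, with respect to the Hessian/Kähler metric, to the ∇^flat-geodesic from η to η'). Then D̄(η‖η') + D̄(η'‖ξ'') = D̄(η‖ξ''). -/

import Mathlib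

open scoped InnerProductSpace
open Filter Topology

/-!
For Bregman divergences `D(a‖b) + D(b‖c) - D(a‖c) = ⟪a - b, ∇φ c - ∇φ b⟫`. For the
boundary-limit divergence `D̄` the same algebra gives
`D̄(a‖b) + D̄(b‖c) - D̄(a‖c) = ½ ∑ (l_r a - l_r b)(log l_r c - log l_r b) + ⟪a - b, ∇f c - ∇f b⟫`,
and this right-hand side is continuous in `b` at `η'`: off `S` because `l_r η' > 0`, on `S`
because `l_r η = 0` leaves only `y ↦ y log y`-type terms. So the orthogonality hypothesis,
which is this expression with `b = ξ' ∈ P°`, forces it to vanish at `b = η'`.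
-/

open Real

variable {E ι : Type*} [NormedAddCommGroup E] [InnerProductSpace ℝ E]
  {ν : ι → E} {lam : ι → ℝ} {l : ι → E → ℝ}

lemma inner_sub_eq_sub_of_affine (hl : ∀ r ξ, l r ξ = ⟪ξ, ν r⟫_ℝ + lam r) (r : ι) (a b : E) :
    ⟪a - b, ν r⟫_ℝ = l r a - l r b := by
  rw [inner_sub_left, hl, hl]
  ring

lemma hasFDerivAt_of_affine (hl : ∀ r ξ, l r ξ = ⟪ξ, ν r⟫_ℝ + lam r) (r : ι) (x : E) :
    HasFDerivAt (l r) (innerSL ℝ (ν r)) x := by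
  have : l r = fun ξ => innerSL ℝ (ν r) ξ + lam r := by
    ext ξ
    rw [hl, innerSL_apply_apply, real_inner_comm]
  rw [this]
  exact (innerSL ℝ (ν r)).hasFDerivAt.add_const _

lemma continuous_of_affine (hl : ∀ r ξ, l r ξ = ⟪ξ, ν r⟫_ℝ + lam r) (r : ι) : Continuous (l r) :=
  continuous_iff_continuousAt.2 fun x => (hasFDerivAt_of_affine hl r x).continuousAt

lemma mem_closure_setOf_forall_pos (hl : ∀ r ξ, l r ξ = ⟪ξ, ν r⟫_ℝ + lam r)
    (hne : {ξ | ∀ r, 0 < l r ξ}.Nonempty) {y : E} (hy : ∀ r, 0 ≤ l r y) :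
    y ∈ closure {ξ | ∀ r, 0 < l r ξ} := by
  obtain ⟨x, hx⟩ := hne
  have hseg : openSegment ℝ x y ⊆ {ξ | ∀ r, 0 < l r ξ} := by
    rintro _ ⟨s, t, hs, ht, hst, rfl⟩ r
    have hlin : l r (s • x + t • y) = s * l r x + t * l r y := by
      simp only [hl, inner_add_left, real_inner_smul_left]
      linear_combination -(lam r) * hst
    rw [hlin]
    have := hx r
    have := hy r
    positivity
  exact closure_mono hseg (segment_subset_closure_openSegment (right_mem_segment ℝ x y))

variable [Fintype ι]

lemma isOpen_setOf_forall_pos (hl : ∀ r ξ, l r ξ = ⟪ξ, ν r⟫_ℝ + lam r) :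
    IsOpen {ξ | ∀ r, 0 < l r ξ} := by
  simp only [Set.ofPred_forall]
  exact isOpen_iInter_of_finite fun r => isOpen_lt continuous_const (continuous_of_affine hl r)

lemma hasFDerivAt_half_sum_mul_log_add (hl : ∀ r ξ, l r ξ = ⟪ξ, ν r⟫_ℝ + lam r) {f : E → ℝ}
    {x : E} (hx : ∀ r, 0 < l r x) (hf : DifferentiableAt ℝ f x) :
    HasFDerivAt (fun ξ => (1 / 2 : ℝ) * ∑ r, l r ξ * log (l r ξ) + f ξ)
      ((1 / 2 : ℝ) • ∑ r, (log (l r x) + 1) • innerSL ℝ (ν r) + fderiv ℝ f x) x := by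
  refine (HasFDerivAt.const_mul (HasFDerivAt.fun_sum fun r _ => ?_) _).add hf.hasFDerivAt
  exact (hasDerivAt_mul_log (hx r).ne').comp_hasFDerivAt x (hasFDerivAt_of_affine hl r x)

variable [CompleteSpace E]

lemma inner_gradient_eq_of_eventuallyEq_sum_mul_log (hl : ∀ r ξ, l r ξ = ⟪ξ, ν r⟫_ℝ + lam r)
    {f φ : E → ℝ} {x : E} (hx : ∀ r, 0 < l r x) (hf : DifferentiableAt ℝ f x)
    (hφ : φ =ᶠ[𝓝 x] fun ξ => (1 / 2 : ℝ) * ∑ r, l r ξ * log (l r ξ) + f ξ) (w : E) :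
    ⟪w, gradient φ x⟫_ℝ = (1 / 2 : ℝ) * ∑ r, (log (l r x) + 1) * ⟪w, ν r⟫_ℝ
      + ⟪w, gradient f x⟫_ℝ := by
  rw [inner_gradient_right, inner_gradient_right, hφ.fderiv_eq,
    (hasFDerivAt_half_sum_mul_log_add hl hx hf).fderiv]
  simp [real_inner_comm]

noncomputable def threePointDefect (l : ι → E → ℝ) (f : E → ℝ) (a b c : E) : ℝ :=
  (1 / 2 : ℝ) * ∑ r, (l r a - l r b) * (log (l r c) - log (l r b))
    + ⟪a - b, gradient f c - gradient f b⟫_ℝ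

lemma inner_sub_gradient_sub_gradient_eq_threePointDefect
    (hl : ∀ r ξ, l r ξ = ⟪ξ, ν r⟫_ℝ + lam r) {f φ : E → ℝ} (a : E) {b c : E}
    (hb : ∀ r, 0 < l r b) (hc : ∀ r, 0 < l r c)
    (hfb : DifferentiableAt ℝ f b) (hfc : DifferentiableAt ℝ f c)
    (hφb : φ =ᶠ[𝓝 b] fun ξ => (1 / 2 : ℝ) * ∑ r, l r ξ * log (l r ξ) + f ξ)
    (hφc : φ =ᶠ[𝓝 c] fun ξ => (1 / 2 : ℝ) * ∑ r, l r ξ * log (l r ξ) + f ξ) :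
    ⟪a - b, gradient φ c - gradient φ b⟫_ℝ = threePointDefect l f a b c := by
  rw [inner_sub_right, inner_gradient_eq_of_eventuallyEq_sum_mul_log hl hc hfc hφc,
    inner_gradient_eq_of_eventuallyEq_sum_mul_log hl hb hfb hφb, threePointDefect, inner_sub_right]
  simp only [inner_sub_eq_sub_of_affine hl]
  have hsum : ∑ r, (log (l r c) + 1) * (l r a - l r b) - ∑ r, (log (l r b) + 1) * (l r a - l r b)
      = ∑ r, (l r a - l r b) * (log (l r c) - log (l r b)) := by
    rw [← Finset.sum_sub_distrib]
    exact Finset.sum_congr rfl fun r _ => by ring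
  linear_combination (1 / 2 : ℝ) * hsum

noncomputable def boundaryBregman (ν : ι → E) (l : ι → E → ℝ) (f : E → ℝ) (ζ ξ' : E) : ℝ :=
  (1 / 2 : ℝ) * ∑ r, (l r ζ * (log (l r ζ) - log (l r ξ')) - ⟪ζ - ξ', ν r⟫_ℝ)
    + ⟪ξ' - ζ, gradient f ξ'⟫_ℝ + f ζ - f ξ'

lemma boundaryBregman_add_sub_eq_threePointDefect (hl : ∀ r ξ, l r ξ = ⟪ξ, ν r⟫_ℝ + lam r)
    (f : E → ℝ) (a b c : E) :
    boundaryBregman ν l f a b + boundaryBregman ν l f b c - boundaryBregman ν l f a c =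
      threePointDefect l f a b c := by
  simp only [boundaryBregman, threePointDefect, inner_sub_eq_sub_of_affine hl, inner_sub_left,
    inner_sub_right]
  have hsum : ∑ r, (l r a * (log (l r a) - log (l r b)) - (l r a - l r b))
      + ∑ r, (l r b * (log (l r b) - log (l r c)) - (l r b - l r c))
      - ∑ r, (l r a * (log (l r a) - log (l r c)) - (l r a - l r c))
      = ∑ r, (l r a - l r b) * (log (l r c) - log (l r b)) := by
    rw [← Finset.sum_add_distrib, ← Finset.sum_sub_distrib]
    exact Finset.sum_congr rfl fun r _ => by ring
  linear_combination (1 / 2 : ℝ) * hsum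

lemma continuousAt_sub_mul_sub_log {s t : ℝ} (u : ℝ) (h : s = 0 ∨ t ≠ 0) :
    ContinuousAt (fun y => (s - y) * (u - log y)) t := by
  rcases h with rfl | ht
  · have : (fun y => (0 - y) * (u - log y)) = fun y => y * log y - u * y := by
      ext y; ring
    rw [this]
    exact (continuous_mul_log.sub (continuous_const_mul u)).continuousAt
  · exact continuousAt_const.sub continuousAt_id |>.mul
      (continuousAt_const.sub (continuousAt_log ht))

lemma continuousAt_threePointDefect (hl : ∀ r ξ, l r ξ = ⟪ξ, ν r⟫_ℝ + lam r) {f : E → ℝ}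
    {a b : E} (c : E) (hab : ∀ r, l r a = 0 ∨ l r b ≠ 0) (hf : ContinuousAt (gradient f) b) :
    ContinuousAt (fun b' => threePointDefect l f a b' c) b := by
  refine (continuousAt_const.mul (tendsto_finsetSum _ fun r _ =>
    (continuousAt_sub_mul_sub_log _ (hab r)).comp (continuous_of_affine hl r).continuousAt)).add ?_
  exact (continuousAt_const.sub continuousAt_id).inner (continuousAt_const.sub hf)

theorem statement12_general {n N : ℕ}
    (ν : Fin N → EuclideanSpace ℝ (Fin n)) (lam : Fin N → ℝ)
    (l : Fin N → EuclideanSpace ℝ (Fin n) → ℝ)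
    (hl : ∀ r ξ, l r ξ = ⟪ξ, ν r⟫_ℝ + lam r)
    (f : EuclideanSpace ℝ (Fin n) → ℝ) (hf : ContDiff ℝ 1 f)
    (Pint : Set (EuclideanSpace ℝ (Fin n)))
    (hPint : Pint = {ξ | ∀ r, 0 < l r ξ}) (hne : Pint.Nonempty)
    (φ : EuclideanSpace ℝ (Fin n) → ℝ)
    (hφ : ∀ ξ ∈ Pint, φ ξ = (1 / 2 : ℝ) * ∑ r, l r ξ * Real.log (l r ξ) + f ξ)
    (Dbar : EuclideanSpace ℝ (Fin n) → EuclideanSpace ℝ (Fin n) → ℝ)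
    (hDbar : ∀ ζ ξ', Dbar ζ ξ' =
      (1 / 2 : ℝ) * ∑ r, (l r ζ * (Real.log (l r ζ) - Real.log (l r ξ')) - ⟪ζ - ξ', ν r⟫_ℝ)
        + ⟪ξ' - ζ, gradient f ξ'⟫_ℝ + f ζ - f ξ')
    (S : Finset (Fin N)) (η η' : EuclideanSpace ℝ (Fin n))
    (hηS : ∀ r ∈ S, l r η = 0) (hη'S : ∀ r ∈ S, l r η' = 0)
    (hη'pos : ∀ r ∉ S, 0 < l r η')
    (ξ'' : EuclideanSpace ℝ (Fin n)) (hξ'' : ξ'' ∈ Pint)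
    (horth : Tendsto (fun ξ' => ⟪η - ξ', gradient φ ξ'' - gradient φ ξ'⟫_ℝ)
      (nhdsWithin η' Pint) (nhds 0)) :
    Dbar η η' + Dbar η' ξ'' = Dbar η ξ'' := by
  obtain rfl : Dbar = boundaryBregman ν l f := funext₂ hDbar
  have hfd : Differentiable ℝ f := hf.differentiable one_ne_zero
  have hpos : ∀ x ∈ Pint, ∀ r, 0 < l r x := fun x hx => by rwa [hPint] at hx
  have hφ_near : ∀ x ∈ Pint, φ =ᶠ[𝓝 x] _ := fun x hx =>
    eventually_of_mem ((hPint ▸ isOpen_setOf_forall_pos hl).mem_nhds hx) hφ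
  have horth' : Tendsto (fun ξ' => threePointDefect l f η ξ' ξ'') (𝓝[Pint] η') (𝓝 0) :=
    horth.congr' <| eventually_nhdsWithin_of_forall fun ξ' hξ' =>
      inner_sub_gradient_sub_gradient_eq_threePointDefect hl η (hpos ξ' hξ') (hpos ξ'' hξ'')
        (hfd ξ') (hfd ξ'') (hφ_near ξ' hξ') (hφ_near ξ'' hξ'')
  have hlim : Tendsto (fun ξ' => threePointDefect l f η ξ' ξ'') (𝓝[Pint] η')
      (𝓝 (threePointDefect l f η η' ξ'')) :=
    (continuousAt_threePointDefect hl ξ''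
      (fun r => (em (r ∈ S)).imp (hηS r) fun hr => (hη'pos r hr).ne')
      ((InnerProductSpace.toDual ℝ _).symm.continuous.comp
        (hf.continuous_fderiv one_ne_zero)).continuousAt).tendsto.mono_left nhdsWithin_le_nhds
  have : (𝓝[Pint] η').NeBot := mem_closure_iff_nhdsWithin_neBot.mp <| hPint ▸
    mem_closure_setOf_forall_pos hl (hPint ▸ hne) fun r =>
      if hr : r ∈ S then (hη'S r hr).ge else (hη'pos r hr).le
  linarith [boundaryBregman_add_sub_eq_threePointDefect hl f η η' ξ'',
    tendsto_nhds_unique hlim horth']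

/-- **Theorem 5.4, extended Pythagorean theorem with two boundary
points.** Let `η, η'` lie in the relative interior of the face of `P` determined by
`S` and let `ξ'' ∈ P°`. If the limiting orthogonality condition
`⟨η − ξ', ∇φ(ξ'') − ∇φ(ξ')⟩ → 0` as `ξ' → η'` within `P°` holds, then
`D̄(η‖η') + D̄(η'‖ξ'') = D̄(η‖ξ'')`. Here `D̄` is given by the boundary-limit formula
with the conventions `0·log 0 = 0` (automatic since `Real.log 0 = 0`; note that for
`r ∈ S` the term `l_r(η)·(log l_r(η) − log l_r(η'))` vanishes since `l_r(η) = 0`). -/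
theorem statement12 {n N : ℕ}
    (ν : Fin N → EuclideanSpace ℝ (Fin n)) (lam : Fin N → ℝ)
    (l : Fin N → EuclideanSpace ℝ (Fin n) → ℝ)
    (hl : ∀ r ξ, l r ξ = ⟪ξ, ν r⟫_ℝ + lam r)
    (f : EuclideanSpace ℝ (Fin n) → ℝ) (hf : ContDiff ℝ 1 f)
    (Pint P : Set (EuclideanSpace ℝ (Fin n)))
    (hPint : Pint = {ξ | ∀ r, 0 < l r ξ}) (hne : Pint.Nonempty)
    (hP : P = {ξ | ∀ r, 0 ≤ l r ξ})
    (φ : EuclideanSpace ℝ (Fin n) → ℝ)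
    (hφ : ∀ ξ ∈ Pint, φ ξ = (1 / 2 : ℝ) * ∑ r, l r ξ * Real.log (l r ξ) + f ξ)
    (Dbar : EuclideanSpace ℝ (Fin n) → EuclideanSpace ℝ (Fin n) → ℝ)
    (hDbar : ∀ ζ ξ', Dbar ζ ξ' =
      (1 / 2 : ℝ) * ∑ r, (l r ζ * (Real.log (l r ζ) - Real.log (l r ξ')) - ⟪ζ - ξ', ν r⟫_ℝ)
        + ⟪ξ' - ζ, gradient f ξ'⟫_ℝ + f ζ - f ξ')
    (S : Finset (Fin N)) (η η' : EuclideanSpace ℝ (Fin n))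
    (hηS : ∀ r ∈ S, l r η = 0) (hη'S : ∀ r ∈ S, l r η' = 0)
    (hηpos : ∀ r ∉ S, 0 < l r η) (hη'pos : ∀ r ∉ S, 0 < l r η')
    (ξ'' : EuclideanSpace ℝ (Fin n)) (hξ'' : ξ'' ∈ Pint)
    (horth : Tendsto (fun ξ' => ⟪η - ξ', gradient φ ξ'' - gradient φ ξ'⟫_ℝ)
      (nhdsWithin η' Pint) (nhds 0)) :
    Dbar η η' + Dbar η' ξ'' = Dbar η ξ'' :=
  statement12_general ν lam l hl f hf Pint hPint hne φ hφ Dbar hDbar S η η' hηS hη'S hη'pos ξ'' hξ''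
    horth
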